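/- The sequential parametrized homotopic distance is invariant under fibrewise homotopy of the maps: if f_i ≃_B g_i for each i = 1,...,r, then D_B(f_1,...,f_r) = D_B(g_1,...,g_r). -/
import Mathlib


open Set

/-- Two continuous maps are fibrewise homotopic over `B`: there is a homotopy
whose every time-slice commutes with the projections to `B`. -/
def FibHomotopic {B X Y : Type*} [TopologicalSpace B] [TopologicalSpace X] [TopologicalSpace Y]
    (pX : X → B) (pY : Y → B) (f g : C(X, Y)) : Prop :=
  ∃ H : f.Homotopy g, ∀ (x : X) (t : unitInterval), pY (H (t, x)) = pX x

/-- Sequential parametrized homotopic distance of a family of fibrewise maps: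
the least `n` such that `X` admits an open cover by `n + 1` open sets on each of
which all the maps are pairwise fibrewise homotopic (`∞` if none exists). -/
noncomputable def fibDist {B X Y ι : Type*} [TopologicalSpace B] [TopologicalSpace X]
    [TopologicalSpace Y] (pX : X → B) (pY : Y → B) (f : ι → C(X, Y)) : ℕ∞ :=
  sInf {n : ℕ∞ | ∃ k : ℕ, (k : ℕ∞) = n ∧ ∃ U : Fin (k + 1) → Set X,
    (∀ i, IsOpen (U i)) ∧ (⋃ i, U i) = Set.univ ∧
    ∀ i s t, FibHomotopic (fun x : U i => pX (x : X)) pY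
      ((f s).restrict (U i)) ((f t).restrict (U i))}

section Aux

variable {B X Y : Type*} [TopologicalSpace B] [TopologicalSpace X] [TopologicalSpace Y]
  {pX : X → B} {pY : Y → B} {f g h : C(X, Y)}

lemma FibHomotopic.symm (hfg : FibHomotopic pX pY f g) : FibHomotopic pX pY g f := by
  obtain ⟨H, hH⟩ := hfg
  exact ⟨H.symm, fun x t => by rw [ContinuousMap.Homotopy.symm_apply]; exact hH x _⟩

lemma FibHomotopic.trans (hfg : FibHomotopic pX pY f g) (hgh : FibHomotopic pX pY g h) :
    FibHomotopic pX pY f h := by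
  obtain ⟨H, hH⟩ := hfg
  obtain ⟨G, hG⟩ := hgh
  refine ⟨H.trans G, fun x t => ?_⟩
  rw [ContinuousMap.Homotopy.trans_apply]
  split
  · exact hH x _
  · exact hG x _

/-- Restriction of a homotopy to a subset. -/
def homRestrict (H : f.Homotopy g) (U : Set X) :
    (f.restrict U).Homotopy (g.restrict U) where
  toFun p := H (p.1, (p.2 : X))
  continuous_toFun := H.continuous.comp (by fun_prop)
  map_zero_left x := by simp [ContinuousMap.restrict]
  map_one_left x := by simp [ContinuousMap.restrict]

lemma FibHomotopic.restrict (hfg : FibHomotopic pX pY f g) (U : Set X) :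
    FibHomotopic (fun x : U => pX (x : X)) pY (f.restrict U) (g.restrict U) := by
  obtain ⟨H, hH⟩ := hfg
  exact ⟨homRestrict H U, fun x t => hH x t⟩

lemma fibDist_le {ι : Type*} {f g : ι → C(X, Y)}
    (hfg : ∀ i, FibHomotopic pX pY (f i) (g i)) :
    fibDist pX pY f ≤ fibDist pX pY g := by
  apply sInf_le_sInf
  rintro n ⟨k, hk, U, hUopen, hUcov, hU⟩
  refine ⟨k, hk, U, hUopen, hUcov, fun i s t => ?_⟩
  exact (((hfg s).restrict (U i)).trans (hU i s t)).trans ((hfg t).restrict (U i)).symm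

end Aux

/-- The sequential parametrized homotopic distance is invariant under fibrewise
homotopy of the maps. -/
theorem stmt3 {B X Y : Type*} [TopologicalSpace B] [TopologicalSpace X] [TopologicalSpace Y]
    (pX : X → B) (pY : Y → B) (hpX : Continuous pX) (hpY : Continuous pY)
    (r : ℕ) (f g : Fin r → C(X, Y))
    (hf : ∀ i x, pY (f i x) = pX x) (hg : ∀ i x, pY (g i x) = pX x)
    (hfg : ∀ i, FibHomotopic pX pY (f i) (g i)) :
    fibDist pX pY f = fibDist pX pY g :=
  le_antisymm (fibDist_le hfg) (fibDist_le fun i => (hfg i).symm)
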